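/- arXiv:0808.2942 — 2 statements merged into one kernel-verified Lean document; each statement's English description precedes it below -/
import Mathlib

section
/- Let G be a discrete group, I a nonempty set, S = B(I,G) the Brandt semigroup, and T = I×G×I. Then the Banach algebra ℓ¹(S) is topologically isomorphic to the Banach algebra ℓ¹(T) ⊕ ℂ with coordinatewise multiplication. -/
open scoped TensorProduct BigOperators ENNReal
open Filter

noncomputable section

/-- `ℓ¹(X)`: the Banach space of absolutely summable complex functions on `X`. -/
abbrev L1 (X : Type) : Type := lp (fun _ : X => ℂ) 1

open Classical in
/-- The point mass `δ_x` in `ℓ¹(X)`. -/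
noncomputable def delta {X : Type} (x : X) : L1 X := lp.single 1 x (1 : ℂ)

/-- The Brandt semigroup `B(I,G) = (I × G × I) ∪ {∘}`, with `∘ = none`. -/
abbrev Brandt (I G : Type) : Type := Option (I × G × I)

open Classical in
/-- Multiplication of the Brandt semigroup: `(i,g,j)(i',g',j') = (i,gg',j')` if
`j = i'` and `∘` otherwise; `∘` is absorbing. -/
noncomputable instance {I G : Type} [Mul G] : Mul (Brandt I G) :=
  ⟨fun a b => match a, b with
    | some (i, g, j), some (i', g', j') => if j = i' then some (i, g * g', j') else none
    | _, _ => none⟩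

open Classical in
/-- The convolution product on `ℓ¹(S)` for a (semi)group `S`:
`(a * b)(s) = ∑_{uv = s} a(u) b(v)`. -/
noncomputable def l1conv {S : Type} [Mul S] (a b : L1 S) (s : S) : ℂ :=
  ∑' p : S × S, if p.1 * p.2 = s then a p.1 * b p.2 else 0

/-!
Writing `∘ = none`, the map `a ↦ (a|_T, ∑ a)` is a topological linear isomorphism
`ℓ¹(S) ≃ ℓ¹(T) × ℂ`, inverse to `(c, t) ↦ c + (t - ∑ c) δ_∘`. It is multiplicative: the
convolution of `a` and `b` is the pushforward of `a ⊗ b` along the multiplication, and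
pushforwards preserve the total sum, so `∑ (a ⋆ b) = ∑ a · ∑ b`; and since `∘` is absorbing,
every pair whose product lies in `T` lies in `T × T`, so restricting to `T` commutes with
convolution, once products falling on `∘` are discarded in `ℓ¹(T)`.
-/

namespace L1

open Function

variable {X Y Z : Type}

lemma summable_norm (a : L1 X) : Summable fun x => ‖a x‖ := by
  simpa using (lp.memℓp a).summable (by norm_num)

lemma summable (a : L1 X) : Summable fun x => a x :=
  (lp.memℓp a).summable_of_one

lemma norm_eq_tsum_norm (a : L1 X) : ‖a‖ = ∑' x, ‖a x‖ := by
  simpa using lp.norm_eq_tsum_rpow (by norm_num) a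

lemma memℓp_of_summable_norm {f : X → ℂ} (hf : Summable fun x => ‖f x‖) : Memℓp f 1 :=
  memℓp_gen (by simpa using hf)

def sum : L1 X →L[ℂ] ℂ := lp.tsumCLM ℂ X ℂ

lemma sum_apply (a : L1 X) : sum a = ∑' x, a x := rfl

lemma hasSum_tsum_fiber_norm (f : X → Y) (c : L1 X) :
    HasSum (fun y => ∑' x : f ⁻¹' {y}, ‖c x‖) ‖c‖ := by
  rw [norm_eq_tsum_norm]
  exact (summable_norm c).hasSum.tsum_fiberwise f

lemma norm_tsum_fiber_le (f : X → Y) (c : L1 X) (y : Y) :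
    ‖∑' x : f ⁻¹' {y}, c x‖ ≤ ∑' x : f ⁻¹' {y}, ‖c x‖ :=
  norm_tsum_le_tsum_norm ((summable_norm c).subtype _)

def mapFun (f : X → Y) (c : L1 X) : L1 Y :=
  ⟨fun y => ∑' x : f ⁻¹' {y}, c x, memℓp_of_summable_norm <|
    .of_nonneg_of_le (fun _ => norm_nonneg _) (norm_tsum_fiber_le f c)
      (hasSum_tsum_fiber_norm f c).summable⟩

def map (f : X → Y) : L1 X →L[ℂ] L1 Y :=
  LinearMap.mkContinuous
    { toFun := mapFun f
      map_add' := fun a b => lp.ext <| funext fun y =>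
        (((summable a).subtype _).tsum_add ((summable b).subtype _))
      map_smul' := fun k a => lp.ext <| funext fun y => tsum_mul_left }
    1 fun c => by
      rw [one_mul, ← (hasSum_tsum_fiber_norm f c).tsum_eq, norm_eq_tsum_norm]
      exact (summable_norm (mapFun f c)).tsum_le_tsum (norm_tsum_fiber_le f c)
        (hasSum_tsum_fiber_norm f c).summable

lemma map_apply_eq_tsum_fiber (f : X → Y) (c : L1 X) (y : Y) :
    map f c y = ∑' x : f ⁻¹' {y}, c x := rfl

open Classical in
lemma map_apply (f : X → Y) (c : L1 X) (y : Y) :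
    map f c y = ∑' x, if f x = y then c x else 0 := by
  rw [map_apply_eq_tsum_fiber, tsum_subtype]
  rfl

lemma sum_map (f : X → Y) (c : L1 X) : sum (map f c) = sum c :=
  ((summable c).hasSum.tsum_fiberwise f).tsum_eq

lemma map_apply_self {f : X → Y} (hf : Injective f) (c : L1 X) (x : X) : map f c (f x) = c x := by
  rw [map_apply_eq_tsum_fiber, ← Set.image_singleton, hf.preimage_image, tsum_singleton]

lemma map_apply_of_notMem_range (f : X → Y) (c : L1 X) {y : Y} (hy : y ∉ Set.range f) :
    map f c y = 0 := by
  rw [map_apply_eq_tsum_fiber, Set.preimage_singleton_eq_empty.2 hy, tsum_empty]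

def comap (g : X → Y) (hg : Injective g) : L1 Y →L[ℂ] L1 X :=
  LinearMap.mkContinuous
    { toFun := fun a => ⟨fun x => a (g x),
        memℓp_of_summable_norm ((summable_norm a).comp_injective hg)⟩
      map_add' := fun _ _ => rfl
      map_smul' := fun _ _ => rfl }
    1 fun a => by
      rw [one_mul, norm_eq_tsum_norm, norm_eq_tsum_norm]
      exact tsum_comp_le_tsum_of_inj (summable_norm a) (fun _ => norm_nonneg _) hg

lemma comap_apply {g : X → Y} (hg : Injective g) (a : L1 Y) (x : X) : comap g hg a x = a (g x) :=
  rfl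

lemma comap_map {g : X → Y} (hg : Injective g) (c : L1 X) : comap g hg (map g c) = c :=
  lp.ext <| funext <| map_apply_self hg c

lemma map_apply_eq_map_comp_comap_apply (f : X → Y) {g : Z → X} (hg : Injective g) (c : L1 X)
    {y : Y} (hy : f ⁻¹' {y} ⊆ Set.range g) :
    map f c y = map (f ∘ g) (comap g hg c) y := by
  classical
  rw [map_apply, map_apply]
  refine (hg.tsum_eq fun x hx => hy ?_).symm
  by_contra h
  exact hx (if_neg h)

def tensor : L1 X →L[ℂ] L1 Y →L[ℂ] L1 (X × Y) :=
  LinearMap.mkContinuous₂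
    (LinearMap.mk₂ ℂ (fun a b => ⟨fun p => a p.1 * b p.2,
        memℓp_of_summable_norm ((summable_norm a).mul_norm (summable_norm b))⟩)
      (fun _ _ _ => lp.ext <| funext fun _ => add_mul _ _ _)
      (fun _ _ _ => lp.ext <| funext fun _ => mul_assoc _ _ _)
      (fun _ _ _ => lp.ext <| funext fun _ => mul_add _ _ _)
      (fun _ _ _ => lp.ext <| funext fun _ => mul_left_comm _ _ _))
    1 fun a b => by
      have hnorm : ∀ c : L1 X, Summable fun x => ‖‖c x‖‖ := by simpa using summable_norm
      rw [one_mul, norm_eq_tsum_norm, norm_eq_tsum_norm a, norm_eq_tsum_norm b,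
        tsum_mul_tsum_of_summable_norm (hnorm a) (by simpa using summable_norm b)]
      exact (tsum_congr fun p => norm_mul _ _).le

lemma sum_tensor (a : L1 X) (b : L1 Y) : sum (tensor a b) = sum a * sum b :=
  (tsum_mul_tsum_of_summable_norm (summable_norm a) (summable_norm b)).symm

/-- The convolution `(a ⋆ b)(z) = ∑_{m x y = z} a x * b y` along a binary map `m`. -/
def conv (m : X → Y → Z) : L1 X →L[ℂ] L1 Y →L[ℂ] L1 Z :=
  (ContinuousLinearMap.compL ℂ _ _ _ (map (uncurry m))).comp tensor

lemma conv_apply (m : X → Y → Z) (a : L1 X) (b : L1 Y) :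
    conv m a b = map (uncurry m) (tensor a b) := rfl

lemma sum_conv (m : X → Y → Z) (a : L1 X) (b : L1 Y) : sum (conv m a b) = sum a * sum b := by
  rw [conv_apply, sum_map, sum_tensor]

lemma sum_delta (x : X) : sum (delta x) = 1 := by
  classical
  simp [sum_apply, delta, lp.single_apply]

lemma comap_some_delta_none : comap some (Option.some_injective X) (delta none) = 0 := by
  classical
  ext x
  simp [comap_apply, delta, lp.single_apply]

lemma map_some_comap_some_add_smul_delta (a : L1 (Option X)) :
    map some (comap some (Option.some_injective X) a) + a none • delta none = a := by
  classical
  ext (_ | x) <;> rw [lp.coeFn_add, Pi.add_apply, lp.coeFn_smul, Pi.smul_apply]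
  · rw [map_apply_of_notMem_range _ _ (by simp)]
    simp [delta, lp.single_apply]
  · rw [map_apply_self (Option.some_injective X)]
    simp [comap_apply, delta, lp.single_apply]

lemma sum_eq_sum_comap_some_add (a : L1 (Option X)) :
    sum a = sum (comap some (Option.some_injective X) a) + a none := by
  conv_lhs => rw [← map_some_comap_some_add_smul_delta a]
  rw [map_add, map_smul, sum_map, sum_delta, smul_eq_mul, mul_one]

def optionEquiv : L1 (Option X) ≃L[ℂ] L1 X × ℂ :=
  .equivOfInverse ((comap some (Option.some_injective X)).prod sum)
    ((map some).comp (.fst ℂ _ _) +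
      (ContinuousLinearMap.snd ℂ _ _ - sum.comp (.fst ℂ _ _)).smulRight (delta none))
    (fun a => by
      change map some (comap some (Option.some_injective X) a) +
        (sum a - sum (comap some (Option.some_injective X) a)) • delta none = a
      rw [sum_eq_sum_comap_some_add a, add_sub_cancel_left, map_some_comap_some_add_smul_delta])
    (fun ⟨c, t⟩ => by
      change (comap some (Option.some_injective X) (map some c + (t - sum c) • delta none),
        sum (map some c + (t - sum c) • delta none)) = (c, t)
      rw [map_add, map_smul, comap_map, comap_some_delta_none, smul_zero, add_zero, map_add,
        map_smul, sum_map, sum_delta, smul_eq_mul, mul_one, add_sub_cancel])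

variable [Mul (Option X)]

/-- The product of the contracted algebra `ℓ¹(S) / ℂ δ_none` of `S = Option X`, realised on
`ℓ¹(X)`: products that fall on `none` are discarded. -/
def contractedConv : L1 X →L[ℂ] L1 X →L[ℂ] L1 X :=
  (ContinuousLinearMap.compL ℂ _ _ _ (comap some (Option.some_injective X))).comp
    (conv fun x y : X => (some x * some y : Option X))

lemma contractedConv_apply (a b : L1 X) (x : X) :
    contractedConv a b x = conv (fun x y : X => (some x * some y : Option X)) a b (some x) := rfl

lemma comap_some_conv_mul (none_mul : ∀ s : Option X, none * s = none)
    (mul_none : ∀ s : Option X, s * none = none) (a b : L1 (Option X)) :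
    comap some (Option.some_injective X) (conv (· * ·) a b) =
      contractedConv (comap some (Option.some_injective X) a)
        (comap some (Option.some_injective X) b) := by
  ext x
  have hfiber : uncurry (· * ·) ⁻¹' {some x} ⊆ Set.range (Prod.map (@some X) some) := by
    rintro ⟨_ | s, _ | t⟩ h <;> simp_all
  exact map_apply_eq_map_comp_comap_apply _
    ((Option.some_injective X).prodMap (Option.some_injective X)) _ hfiber

theorem optionEquiv_conv_mul (none_mul : ∀ s : Option X, none * s = none)
    (mul_none : ∀ s : Option X, s * none = none) (a b : L1 (Option X)) :
    optionEquiv (conv (· * ·) a b) =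
      (contractedConv (optionEquiv a).1 (optionEquiv b).1, (optionEquiv a).2 * (optionEquiv b).2) :=
  Prod.ext (comap_some_conv_mul none_mul mul_none a b) (sum_conv _ a b)

end L1

namespace Brandt

variable {I G : Type}

lemma none_mul [Mul G] (s : Brandt I G) : none * s = none := by
  cases s <;> rfl

lemma mul_none [Mul G] (s : Brandt I G) : s * none = none := by
  rcases s with _ | ⟨i, g, j⟩ <;> rfl

lemma some_mul_some_eq_some [Group G] {u v : I × G × I} {i j : I} {g : G} :
    (some u * some v : Brandt I G) = some (i, g, j) ↔
      ∃ k h, u = (i, g * h⁻¹, k) ∧ v = (k, h, j) := by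
  classical
  obtain ⟨i₁, g₁, j₁⟩ := u
  obtain ⟨i₂, g₂, j₂⟩ := v
  change (if j₁ = i₂ then some (i₁, g₁ * g₂, j₂) else none) = _ ↔ _
  split_ifs with h
  · subst h
    simp [eq_mul_inv_iff_mul_eq, and_comm, and_left_comm, eq_comm]
  · simp only [false_iff, not_exists, not_and, Prod.mk.injEq]
    rintro k g' ⟨-, -, rfl⟩ rfl
    exact absurd rfl h

lemma contractedConv_apply [Group G] (a b : L1 (I × G × I)) (i : I) (g : G) (j : I) :
    L1.contractedConv a b (i, g, j) = ∑' p : I × G, a (i, g * p.2⁻¹, p.1) * b (p.1, p.2, j) := by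
  classical
  set ψ : I × G → (I × G × I) × (I × G × I) := fun p => ((i, g * p.2⁻¹, p.1), (p.1, p.2, j))
  have hψ : Function.Injective ψ := fun p q h => by
    simp only [ψ, Prod.mk.injEq] at h
    exact Prod.ext h.2.1 h.2.2.1
  have hfiber : Function.uncurry (fun x y : I × G × I => (some x * some y : Brandt I G)) ⁻¹'
      {some (i, g, j)} ⊆ Set.range ψ := by
    rintro ⟨u, v⟩ huv
    obtain ⟨k, h, rfl, rfl⟩ := some_mul_some_eq_some.1 huv
    exact ⟨(k, h), rfl⟩
  rw [L1.contractedConv_apply, L1.conv_apply,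
    L1.map_apply_eq_map_comp_comap_apply _ hψ _ hfiber, L1.map_apply]
  exact tsum_congr fun p => if_pos (some_mul_some_eq_some.2 ⟨p.1, p.2, rfl, rfl⟩)

end Brandt

theorem brandt_morita_stmt8_general (I G : Type) [Group G] :
    ∃ (mulT : L1 (I × G × I) →L[ℂ] L1 (I × G × I) →L[ℂ] L1 (I × G × I))
      (mulS : L1 (Brandt I G) →L[ℂ] L1 (Brandt I G) →L[ℂ] L1 (Brandt I G)),
      (∀ (a b : L1 (I × G × I)) (i : I) (g : G) (j : I),
        mulT a b (i, g, j) = ∑' p : I × G, a (i, g * p.2⁻¹, p.1) * b (p.1, p.2, j)) ∧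
      (∀ (a b : L1 (Brandt I G)) (s : Brandt I G), mulS a b s = l1conv a b s) ∧
      ∃ e : L1 (Brandt I G) ≃L[ℂ] (L1 (I × G × I) × ℂ),
        ∀ a b : L1 (Brandt I G),
          e (mulS a b) = (mulT (e a).1 (e b).1, (e a).2 * (e b).2) :=
  ⟨L1.contractedConv, L1.conv (· * ·), Brandt.contractedConv_apply,
    fun _ _ => L1.map_apply _ _, L1.optionEquiv,
    L1.optionEquiv_conv_mul Brandt.none_mul Brandt.mul_none⟩

/-- For the Brandt semigroup `S = B(I,G)` and `T = I×G×I`, the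
Banach algebra `ℓ¹(S)` is topologically isomorphic to the Banach algebra
`ℓ¹(T) ⊕ ℂ` with coordinatewise multiplication. -/
theorem brandt_morita_stmt8 (I G : Type) [Nonempty I] [Group G] :
    ∃ (mulT : L1 (I × G × I) →L[ℂ] L1 (I × G × I) →L[ℂ] L1 (I × G × I))
      (mulS : L1 (Brandt I G) →L[ℂ] L1 (Brandt I G) →L[ℂ] L1 (Brandt I G)),
      (∀ (a b : L1 (I × G × I)) (i : I) (g : G) (j : I),
        mulT a b (i, g, j) = ∑' p : I × G, a (i, g * p.2⁻¹, p.1) * b (p.1, p.2, j)) ∧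
      (∀ (a b : L1 (Brandt I G)) (s : Brandt I G), mulS a b s = l1conv a b s) ∧
      ∃ e : L1 (Brandt I G) ≃L[ℂ] (L1 (I × G × I) × ℂ),
        ∀ a b : L1 (Brandt I G),
          e (mulS a b) = (mulT (e a).1 (e b).1, (e a).2 * (e b).2) :=
  brandt_morita_stmt8_general I G
end
end

section
/- Let I and J be nonempty sets and let G be a discrete group. Then ℓ¹(B(I,G)) and ℓ¹(B(J,G)) are self-induced Banach algebras and they are Morita equivalent in the sense of Grønbæk. -/
open scoped TensorProduct BigOperators ENNReal
open Filter

noncomputable section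

/-- The projective tensor norm of an element of the algebraic tensor product
`E ⊗[ℂ] F`: the infimum of `∑ ‖xᵢ‖ ‖yᵢ‖` over all finite representations
`z = ∑ xᵢ ⊗ yᵢ`. -/
def projNorm {E F : Type} [SeminormedAddCommGroup E] [NormedSpace ℂ E]
    [SeminormedAddCommGroup F] [NormedSpace ℂ F] (z : E ⊗[ℂ] F) : ℝ :=
  sInf {r : ℝ | ∃ (n : ℕ) (x : Fin n → E) (y : Fin n → F),
    z = ∑ i, x i ⊗ₜ[ℂ] y i ∧ r = ∑ i, ‖x i‖ * ‖y i‖}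

/-- `(T, φ)` is a realization of the completed projective tensor product `E ⊗̂ F`:
`T` is a Banach space, the canonical map from the algebraic tensor product is an
isometry with respect to the projective tensor norm, and it has dense range. -/
structure IsProjTensor (E F T : Type) [SeminormedAddCommGroup E] [NormedSpace ℂ E]
    [SeminormedAddCommGroup F] [NormedSpace ℂ F]
    [SeminormedAddCommGroup T] [NormedSpace ℂ T]
    (φ : E →ₗ[ℂ] F →ₗ[ℂ] T) : Prop where
  complete : CompleteSpace T
  isometry : ∀ z : E ⊗[ℂ] F, ‖TensorProduct.lift φ z‖ = projNorm z
  dense : DenseRange ⇑(TensorProduct.lift φ)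

/-- The closed linear span of the `A`-balancing relations
`{x·a ⊗ y - x ⊗ a·y}` inside a realization `T` of `E ⊗̂ F`; the quotient
`T ⧸ balancer φ r l` is the `A`-module tensor product `E ⊗̂_A F`. -/
def balancer {A E F T : Type} [SeminormedAddCommGroup E] [NormedSpace ℂ E]
    [SeminormedAddCommGroup F] [NormedSpace ℂ F]
    [SeminormedAddCommGroup T] [NormedSpace ℂ T]
    (φ : E →ₗ[ℂ] F →ₗ[ℂ] T) (r : E → A → E) (l : A → F → F) : Submodule ℂ T :=
  (Submodule.span ℂ {z : T | ∃ (x : E) (a : A) (y : F), z = φ (r x a) y - φ x (l a y)}).topologicalClosure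

/-- A left Banach `A`-module `(E, l)` is `A`-induced: for every realization `T` of
`A ⊗̂ E`, the canonical map `A ⊗̂_A E → E`, `a ⊗ x ↦ a·x`, is a topological
isomorphism. -/
def LeftInduced {A E : Type} [SeminormedAddCommGroup A] [NormedSpace ℂ A]
    [SeminormedAddCommGroup E] [NormedSpace ℂ E]
    (mulA : A →L[ℂ] A →L[ℂ] A) (l : A →L[ℂ] E →L[ℂ] E) : Prop :=
  ∀ (T : Type) [SeminormedAddCommGroup T] [NormedSpace ℂ T]
    (φ : A →ₗ[ℂ] E →ₗ[ℂ] T), IsProjTensor A E T φ →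
    ∃ e : (T ⧸ balancer φ (fun a b => mulA a b) (fun a x => l a x)) ≃L[ℂ] E,
      ∀ (a : A) (x : E), e (Submodule.Quotient.mk (φ a x)) = l a x

/-- A right Banach `A`-module `(E, r)` is `A`-induced. -/
def RightInduced {A E : Type} [SeminormedAddCommGroup A] [NormedSpace ℂ A]
    [SeminormedAddCommGroup E] [NormedSpace ℂ E]
    (mulA : A →L[ℂ] A →L[ℂ] A) (r : E →L[ℂ] A →L[ℂ] E) : Prop :=
  ∀ (T : Type) [SeminormedAddCommGroup T] [NormedSpace ℂ T]
    (φ : E →ₗ[ℂ] A →ₗ[ℂ] T), IsProjTensor E A T φ →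
    ∃ e : (T ⧸ balancer φ (fun x a => r x a) (fun a b => mulA a b)) ≃L[ℂ] E,
      ∀ (x : E) (a : A), e (Submodule.Quotient.mk (φ x a)) = r x a

/-- A Banach algebra `(A, mul)` is self-induced: the multiplication map
`A ⊗̂_A A → A` is an isomorphism of `A`-bimodules. -/
def SelfInduced {A : Type} [SeminormedAddCommGroup A] [NormedSpace ℂ A]
    (mulA : A →L[ℂ] A →L[ℂ] A) : Prop :=
  ∀ (T : Type) [SeminormedAddCommGroup T] [NormedSpace ℂ T]
    (φ : A →ₗ[ℂ] A →ₗ[ℂ] T), IsProjTensor A A T φ →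
    ∃ e : (T ⧸ balancer φ (fun a b => mulA a b) (fun a b => mulA a b)) ≃L[ℂ] A,
      (∀ a b : A, e (Submodule.Quotient.mk (φ a b)) = mulA a b) ∧
      (∀ c a b : A, e (Submodule.Quotient.mk (φ (mulA c a) b))
          = mulA c (e (Submodule.Quotient.mk (φ a b)))) ∧
      (∀ a b c : A, e (Submodule.Quotient.mk (φ a (mulA b c)))
          = mulA (e (Submodule.Quotient.mk (φ a b))) c)

/-- `(E, l, r)` is a Banach bimodule: left over `(A, mulL)`, right over `(B, mulR)`. -/
def IsBimoduleLaw {A B E : Type} [SeminormedAddCommGroup A] [NormedSpace ℂ A]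
    [SeminormedAddCommGroup B] [NormedSpace ℂ B]
    [SeminormedAddCommGroup E] [NormedSpace ℂ E]
    (mulL : A →L[ℂ] A →L[ℂ] A) (mulR : B →L[ℂ] B →L[ℂ] B)
    (l : A →L[ℂ] E →L[ℂ] E) (r : E →L[ℂ] B →L[ℂ] E) : Prop :=
  (∀ (a a' : A) (x : E), l (mulL a a') x = l a (l a' x)) ∧
  (∀ (x : E) (b b' : B), r (r x b) b' = r x (mulR b b')) ∧
  (∀ (a : A) (x : E) (b : B), r (l a x) b = l a (r x b))

/-- A witness for Morita equivalence of `(A, mulA)` and `(B, mulB)` in the sense of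
Grønbæk's characterization: two-sided induced Banach bimodules `P ∈ B-mod-A` and
`Q ∈ A-mod-B` with `P ⊗̂_A Q ≅ B` and `Q ⊗̂_B P ≅ A` as bimodules. -/
structure MoritaWitness (A B : Type) [NormedAddCommGroup A] [NormedSpace ℂ A]
    [NormedAddCommGroup B] [NormedSpace ℂ B]
    (mulA : A →L[ℂ] A →L[ℂ] A) (mulB : B →L[ℂ] B →L[ℂ] B) : Type 1 where
  P : Type
  Q : Type
  [iP1 : NormedAddCommGroup P] [iP2 : NormedSpace ℂ P] [iP3 : CompleteSpace P]
  [iQ1 : NormedAddCommGroup Q] [iQ2 : NormedSpace ℂ Q] [iQ3 : CompleteSpace Q]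
  lP : B →L[ℂ] P →L[ℂ] P
  rP : P →L[ℂ] A →L[ℂ] P
  lQ : A →L[ℂ] Q →L[ℂ] Q
  rQ : Q →L[ℂ] B →L[ℂ] Q
  lawP : IsBimoduleLaw mulB mulA lP rP
  lawQ : IsBimoduleLaw mulA mulB lQ rQ
  indPl : LeftInduced mulB lP
  indPr : RightInduced mulA rP
  indQl : LeftInduced mulA lQ
  indQr : RightInduced mulB rQ
  isoB : ∀ (T : Type) [SeminormedAddCommGroup T] [NormedSpace ℂ T]
    (φ : P →ₗ[ℂ] Q →ₗ[ℂ] T), IsProjTensor P Q T φ →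
    ∃ e : (T ⧸ balancer φ (fun x a => rP x a) (fun a y => lQ a y)) ≃L[ℂ] B,
      (∀ (b : B) (p : P) (q : Q), e (Submodule.Quotient.mk (φ (lP b p) q))
          = mulB b (e (Submodule.Quotient.mk (φ p q)))) ∧
      (∀ (b : B) (p : P) (q : Q), e (Submodule.Quotient.mk (φ p (rQ q b)))
          = mulB (e (Submodule.Quotient.mk (φ p q))) b)
  isoA : ∀ (T : Type) [SeminormedAddCommGroup T] [NormedSpace ℂ T]
    (φ : Q →ₗ[ℂ] P →ₗ[ℂ] T), IsProjTensor Q P T φ →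
    ∃ e : (T ⧸ balancer φ (fun y b => rQ y b) (fun b x => lP b x)) ≃L[ℂ] A,
      (∀ (a : A) (q : Q) (p : P), e (Submodule.Quotient.mk (φ (lQ a q) p))
          = mulA a (e (Submodule.Quotient.mk (φ q p)))) ∧
      (∀ (a : A) (q : Q) (p : P), e (Submodule.Quotient.mk (φ q (rP p a)))
          = mulA (e (Submodule.Quotient.mk (φ q p))) a)

/-- Morita equivalence of self-induced Banach algebras, via Grønbæk's
characterization. -/
def MoritaEquivalent {A B : Type} [NormedAddCommGroup A] [NormedSpace ℂ A]
    [NormedAddCommGroup B] [NormedSpace ℂ B]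
    (mulA : A →L[ℂ] A →L[ℂ] A) (mulB : B →L[ℂ] B →L[ℂ] B) : Prop :=
  Nonempty (MoritaWitness A B mulA mulB)

/-! Convolution turns any map `m : X → Y → Z` into a contractive bilinear map
`ℓ¹(X) × ℓ¹(Y) → ℓ¹(Z)`. Suppose `m (x * w) y = m x (w * y)` for "actions" `X × W → X` and
`W × Y → Y`, and every pair `(x, y)` is connected by such balancing moves to a chosen point `c z`
of its fibre over `z = m x y`, with `m` surjective. Then `ℓ¹(X) ⊗̂_{ℓ¹(W)} ℓ¹(Y) ≅ ℓ¹(Z)`: the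
universal property of `⊗̂` produces the map to `ℓ¹(Z)`, and `δ_z ↦ [δ_{(c z).1} ⊗ δ_{(c z).2}]`
is its inverse.

For rectangular Brandt elements, `((i,g,j), (j,h,k))` is one move away from
`((i,gh,b₀), (b₀,1,k))`, and a pair with product `∘` is two moves away from `(∘, ∘)`. So
self-inducedness of `ℓ¹(B(I,G))`, inducedness of `P = ℓ¹(J × G × I)` and `Q = ℓ¹(I × G × J)`,
and the isomorphisms `P ⊗̂_A Q ≅ B`, `Q ⊗̂_B P ≅ A` are all instances of this one identification.
-/

namespace L1

variable {X Y Z : Type}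

open Classical in
lemma delta_apply (x y : X) : (delta x : L1 X) y = if y = x then 1 else 0 := by
  simp [delta, lp.single_apply, Pi.single_apply]

lemma norm_delta (x : X) : ‖(delta x : L1 X)‖ = 1 := by
  simp [delta, lp.norm_single]

open Classical in
lemma ext_delta {M : Type} [TopologicalSpace M] [AddCommMonoid M] [Module ℂ M] [T2Space M]
    {f g : L1 X →L[ℂ] M} (h : ∀ x, f (delta x) = g (delta x)) : f = g :=
  lp.ext_continuousLinearMap ENNReal.one_ne_top fun x => ContinuousLinearMap.ext_ring (h x)

lemma ext_delta₂ {M : Type} [NormedAddCommGroup M] [NormedSpace ℂ M]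
    {f g : L1 X →L[ℂ] L1 Y →L[ℂ] M} (h : ∀ x y, f (delta x) (delta y) = g (delta x) (delta y)) :
    f = g :=
  ext_delta fun x => ext_delta (h x)

section sumL

variable {M : Type} [NormedAddCommGroup M] [NormedSpace ℂ M] [CompleteSpace M]

def sumL (v : X → M) {K : ℝ} (hK : 0 ≤ K) (hv : ∀ x, ‖v x‖ ≤ K) : L1 X →L[ℂ] M :=
  (lp.tsumCLM ℂ X M).comp
    (lp.mapCLM 1 (fun x => ContinuousLinearMap.toSpanSingleton ℂ (v x)) hK (by simpa using hv))

variable (v : X → M) {K : ℝ} (hK : 0 ≤ K) (hv : ∀ x, ‖v x‖ ≤ K)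

lemma sumL_apply (f : L1 X) : sumL v hK hv f = ∑' x, f x • v x := by
  simp [sumL, lp.mapCLM_apply_coe]

lemma sumL_delta (x : X) : sumL v hK hv (delta x) = v x := by
  rw [sumL_apply, tsum_eq_single x] <;> simp +contextual [delta_apply]

lemma norm_sumL_le : ‖sumL v hK hv‖ ≤ K :=
  (ContinuousLinearMap.opNorm_comp_le _ _).trans <| by
    simpa using mul_le_mul lp.norm_tsumCLM_le (lp.norm_mapCLM_le _ _ hK _) (norm_nonneg _)
      zero_le_one

end sumL

def convL (μ : X → Y → Z) : L1 X →L[ℂ] L1 Y →L[ℂ] L1 Z :=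
  sumL (fun x => sumL (fun y => delta (μ x y)) zero_le_one fun _ => (norm_delta _).le)
    zero_le_one fun _ => norm_sumL_le _ _ _

lemma convL_delta (μ : X → Y → Z) (x : X) (y : Y) :
    convL μ (delta x) (delta y) = delta (μ x y) := by
  rw [convL, sumL_delta, sumL_delta]

lemma hasSum_delta (f : L1 X) : HasSum (fun x => f x • delta x) f := by
  classical
  convert lp.hasSum_single ENNReal.one_ne_top f using 2 with x
  rw [delta, ← lp.single_smul, smul_eq_mul, mul_one]

open Classical in
lemma convL_apply_apply (μ : X → Y → Z) (a : L1 X) (b : L1 Y) (s : Z) :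
    convL μ a b s = ∑' p : X × Y, if μ p.1 p.2 = s then a p.1 * b p.2 else 0 := by
  set F : X × Y → ℂ := fun p => if μ p.1 p.2 = s then a p.1 * b p.2 else 0
  have hF : Summable F := by
    have hab := summable_mul_of_summable_norm (f := fun x => a x) (g := fun y => b y)
      (by simpa using (lp.memℓp a).summable (by norm_num))
      (by simpa using (lp.memℓp b).summable (by norm_num))
    refine hab.norm.of_norm_bounded fun p => ?_
    simp only [F]
    split_ifs <;> simp [mul_nonneg]
  have heval : ∀ f : L1 Z, lp.evalCLM ℂ _ 1 s f = f s := fun _ => rfl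
  have hfiber : ∀ x, HasSum (fun y => F (x, y)) (a x * convL μ (delta x) b s) := by
    intro x
    have := (hasSum_delta b).mapL ((lp.evalCLM ℂ _ 1 s).comp (convL μ (delta x)))
    simp only [map_smul, ContinuousLinearMap.comp_apply, convL_delta, heval] at this
    refine (this.mul_left (a x)).congr_fun fun y => ?_
    show (if μ x y = s then a x * b y else 0) = _
    by_cases h : μ x y = s
    · simp [h, delta_apply]
    · simp [h, Ne.symm h, delta_apply]
  have hsum : HasSum (fun x => a x * convL μ (delta x) b s) (convL μ a b s) := by
    have := (hasSum_delta a).mapL ((lp.evalCLM ℂ _ 1 s).comp ((convL μ).flip b))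
    simp only [map_smul, ContinuousLinearMap.comp_apply, ContinuousLinearMap.flip_apply, heval,
      smul_eq_mul] at this
    exact this
  exact hsum.unique (hF.hasSum.prod_fiberwise hfiber)

lemma convL_convL {U V U' R : Type} {μ : X → Y → U} {ν : U → V → R} {μ' : Y → V → U'}
    {ν' : X → U' → R} (h : ∀ x y v, ν (μ x y) v = ν' x (μ' y v))
    (a : L1 X) (b : L1 Y) (c : L1 V) :
    convL ν (convL μ a b) c = convL ν' a (convL μ' b c) := by
  have hδ : ∀ y v, ((convL ν).flip (delta v)).comp ((convL μ).flip (delta y))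
      = (convL ν').flip (convL μ' (delta y) (delta v)) :=
    fun y v => ext_delta fun x => by simp [convL_delta, h]
  have hδv : ∀ v, ((convL ν).flip (delta v)).comp (convL μ a)
      = (convL ν' a).comp ((convL μ').flip (delta v)) :=
    fun v => ext_delta fun y => by simpa using congrArg (· a) (hδ y v)
  have : convL ν (convL μ a b) = (convL ν' a).comp (convL μ' b) :=
    ext_delta fun v => by simpa using congrArg (· b) (hδv v)
  simpa using congrArg (· c) this

end L1

open L1

section ProjectiveTensor

variable {E F T M : Type} [SeminormedAddCommGroup E] [NormedSpace ℂ E]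
  [SeminormedAddCommGroup F] [NormedSpace ℂ F] [SeminormedAddCommGroup T] [NormedSpace ℂ T]

lemma TensorProduct.exists_eq_sum_tmul (z : E ⊗[ℂ] F) :
    ∃ (n : ℕ) (x : Fin n → E) (y : Fin n → F), z = ∑ i, x i ⊗ₜ[ℂ] y i := by
  induction z using TensorProduct.induction_on with
  | zero => exact ⟨0, Fin.elim0, Fin.elim0, by simp⟩
  | tmul x y => exact ⟨1, fun _ => x, fun _ => y, by simp⟩
  | add z w hz hw =>
    obtain ⟨n, x, y, rfl⟩ := hz
    obtain ⟨n', x', y', rfl⟩ := hw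
    exact ⟨n + n', Fin.append x x', Fin.append y y', by simp [Fin.sum_univ_add]⟩

lemma projNorm_tmul_le (x : E) (y : F) : projNorm (x ⊗ₜ[ℂ] y) ≤ ‖x‖ * ‖y‖ :=
  csInf_le ⟨0, by rintro r ⟨n, x, y, -, rfl⟩; positivity⟩
    ⟨1, fun _ => x, fun _ => y, by simp, by simp⟩

lemma norm_lift_le_mul_projNorm [SeminormedAddCommGroup M] [NormedSpace ℂ M]
    (B : E →L[ℂ] F →L[ℂ] M) (z : E ⊗[ℂ] F) :
    ‖TensorProduct.lift B.toLinearMap₁₂ z‖ ≤ ‖B‖ * projNorm z := by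
  rw [projNorm, ← smul_eq_mul, ← Real.sInf_smul_of_nonneg (norm_nonneg B)]
  obtain ⟨n, x, y, hz⟩ := TensorProduct.exists_eq_sum_tmul z
  refine le_csInf ⟨_, Set.smul_mem_smul_set ⟨n, x, y, hz, rfl⟩⟩ ?_
  rintro _ ⟨_, ⟨n, x, y, rfl, rfl⟩, rfl⟩
  show _ ≤ ‖B‖ * _
  rw [map_sum, Finset.mul_sum]
  refine (norm_sum_le _ _).trans (Finset.sum_le_sum fun i _ => ?_)
  simpa [mul_assoc] using B.le_opNorm₂ (x i) (y i)

namespace IsProjTensor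

variable {φ : E →ₗ[ℂ] F →ₗ[ℂ] T} (h : IsProjTensor E F T φ)
include h

lemma norm_apply_le (x : E) (y : F) : ‖φ x y‖ ≤ ‖x‖ * ‖y‖ := by
  have := h.isometry (x ⊗ₜ y)
  rw [TensorProduct.lift.tmul] at this
  exact this ▸ projNorm_tmul_le x y

theorem exists_extend [NormedAddCommGroup M] [NormedSpace ℂ M] [CompleteSpace M]
    (B : E →L[ℂ] F →L[ℂ] M) : ∃ π : T →L[ℂ] M, ∀ x y, π (φ x y) = B x y := by
  set lφ := TensorProduct.lift φ
  set lB := TensorProduct.lift B.toLinearMap₁₂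
  have hle : ∀ z, ‖lB z‖ ≤ ‖B‖ * ‖lφ z‖ := fun z => by
    rw [h.isometry]; exact norm_lift_le_mul_projNorm B z
  have hker : LinearMap.ker lφ ≤ LinearMap.ker lB := fun z hz => by
    simpa [LinearMap.mem_ker.mp hz] using hle z
  set S := LinearMap.range lφ
  set g : S →ₗ[ℂ] M := ((LinearMap.ker lφ).liftQ lB hker).comp
    (LinearMap.quotKerEquivRange lφ).symm.toLinearMap
  have hg : ∀ z, g ⟨lφ z, LinearMap.mem_range_self lφ z⟩ = lB z := fun z => by
    rw [LinearMap.comp_apply, LinearEquiv.coe_coe, LinearMap.quotKerEquivRange_symm_apply_image]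
    rfl
  have hgS : ∀ s : S, ‖g s‖ ≤ ‖B‖ * ‖s‖ := by
    rintro ⟨_, z, rfl⟩
    exact (hg z).symm ▸ hle z
  have hdense : DenseRange S.subtypeL := h.dense.mono <| by
    rintro _ ⟨z, rfl⟩
    exact ⟨⟨_, LinearMap.mem_range_self lφ z⟩, rfl⟩
  have hind : IsUniformInducing S.subtypeL :=
    (AddMonoidHomClass.isometry_of_norm S.subtypeL fun _ => rfl).isUniformInducing
  refine ⟨(g.mkContinuous _ hgS).extend S.subtypeL, fun x y => ?_⟩
  have hxy : φ x y = S.subtypeL ⟨lφ (x ⊗ₜ y), LinearMap.mem_range_self lφ _⟩ :=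
    (TensorProduct.lift.tmul x y).symm
  rw [hxy, ContinuousLinearMap.extend_eq _ hdense hind, LinearMap.mkContinuous_apply, hg]
  exact TensorProduct.lift.tmul x y

end IsProjTensor

end ProjectiveTensor

section Balancer

variable {A E F T : Type} [SeminormedAddCommGroup E] [NormedSpace ℂ E]
  [SeminormedAddCommGroup F] [NormedSpace ℂ F] [SeminormedAddCommGroup T] [NormedSpace ℂ T]
  {φ : E →ₗ[ℂ] F →ₗ[ℂ] T} {r : E → A → E} {l : A → F → F}

lemma apply_sub_apply_mem_balancer (x : E) (a : A) (y : F) :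
    φ (r x a) y - φ x (l a y) ∈ balancer φ r l :=
  Submodule.le_topologicalClosure _ (Submodule.subset_span ⟨x, a, y, rfl⟩)

instance : IsClosed (balancer φ r l : Set T) :=
  Submodule.isClosed_topologicalClosure _

lemma balancer_le_ker {M : Type} [NormedAddCommGroup M] [NormedSpace ℂ M] (π : T →L[ℂ] M)
    (hπ : ∀ x a y, π (φ (r x a) y) = π (φ x (l a y))) : balancer φ r l ≤ π.ker :=
  Submodule.topologicalClosure_minimal _
    (Submodule.span_le.mpr <| by rintro _ ⟨x, a, y, rfl⟩; simp [hπ]) π.isClosed_ker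

end Balancer

def BalancingMove {X W Y : Type} (ρ : X → W → X) (lam : W → Y → Y) (p q : X × Y) : Prop :=
  ∃ x w y, p = (ρ x w, y) ∧ q = (x, lam w y)

section BalancedTensor

variable {X W Y Z : Type} {ρ : X → W → X} {lam : W → Y → Y} {m : X → Y → Z}
  {T : Type} [SeminormedAddCommGroup T] [NormedSpace ℂ T] {φ : L1 X →ₗ[ℂ] L1 Y →ₗ[ℂ] T}

lemma delta_sub_delta_mem_balancer {p q : X × Y} (hpq : Relation.EqvGen (BalancingMove ρ lam) p q) :
    φ (delta p.1) (delta p.2) - φ (delta q.1) (delta q.2)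
      ∈ balancer φ (fun x w => convL ρ x w) (fun w y => convL lam w y) := by
  induction hpq with
  | rel _ _ hmove =>
    obtain ⟨x, w, y, rfl, rfl⟩ := hmove
    simpa [convL_delta] using apply_sub_apply_mem_balancer (φ := φ)
      (r := fun x w => convL ρ x w) (l := fun w y => convL lam w y) (delta x) (delta w) (delta y)
  | refl => simp
  | symm _ _ _ ih => simpa using neg_mem ih
  | trans _ _ _ _ _ ih₁ ih₂ => simpa using add_mem ih₁ ih₂

variable (h : IsProjTensor (L1 X) (L1 Y) T φ)
include h

lemma exists_liftQ_balancer (hm : ∀ x w y, m (ρ x w) y = m x (lam w y)) :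
    ∃ π : (T ⧸ balancer φ (fun x w => convL ρ x w) (fun w y => convL lam w y)) →L[ℂ] L1 Z,
      ∀ a b, π (Submodule.Quotient.mk (φ a b)) = convL m a b := by
  obtain ⟨π, hπ⟩ := h.exists_extend (convL m)
  refine ⟨Submodule.liftQL _ π (balancer_le_ker π fun x w y => ?_), hπ⟩
  simp only [hπ]
  exact convL_convL hm x w y

lemma exists_section_balancer (c : Z → X × Y)
    (hreach : ∀ x y, Relation.EqvGen (BalancingMove ρ lam) (x, y) (c (m x y))) :
    ∃ ψ : L1 Z →L[ℂ] (T ⧸ balancer φ (fun x w => convL ρ x w) (fun w y => convL lam w y)),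
      ∀ a b, ψ (convL m a b) = Submodule.Quotient.mk (φ a b) := by
  set bal := balancer φ (fun x w => convL ρ x w) (fun w y => convL lam w y)
  have := h.complete
  set φL := LinearMap.mkContinuous₂ φ 1 fun x y => by simpa using h.norm_apply_le x y
  set ψ := sumL (fun z => bal.mkQ (φ (delta (c z).1) (delta (c z).2))) zero_le_one fun z =>
    (Submodule.Quotient.norm_mk_le _ _).trans <| by
      simpa [norm_delta] using h.norm_apply_le (delta (c z).1) (delta (c z).2)
  suffices (ContinuousLinearMap.compL ℂ _ _ _ ψ).comp (convL m)
      = (ContinuousLinearMap.compL ℂ _ _ _ bal.mkQL).comp φL from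
    ⟨ψ, fun a b => by simpa [φL] using congr($this a b)⟩
  refine ext_delta₂ fun x y => ?_
  simp only [ContinuousLinearMap.comp_apply, ContinuousLinearMap.compL_apply, convL_delta]
  exact (sumL_delta _ _ _ _).trans
    ((Submodule.Quotient.eq bal).mpr (delta_sub_delta_mem_balancer (hreach x y).symm))

theorem exists_quotient_balancer_equiv (hm : ∀ x w y, m (ρ x w) y = m x (lam w y))
    (c : Z → X × Y) (hc : ∀ z, m (c z).1 (c z).2 = z)
    (hreach : ∀ x y, Relation.EqvGen (BalancingMove ρ lam) (x, y) (c (m x y))) :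
    ∃ e : (T ⧸ balancer φ (fun x w => convL ρ x w) (fun w y => convL lam w y)) ≃L[ℂ] L1 Z,
      ∀ a b, e (Submodule.Quotient.mk (φ a b)) = convL m a b := by
  obtain ⟨π, hπ⟩ := exists_liftQ_balancer h hm
  obtain ⟨ψ, hψ⟩ := exists_section_balancer h c hreach
  have hπψ : Function.RightInverse ψ π := by
    suffices π.comp ψ = .id ℂ _ from fun f => congr($this f)
    refine ext_delta fun z => ?_
    have hz : delta z = convL m (delta (c z).1) (delta (c z).2) := by rw [convL_delta, hc]
    rw [ContinuousLinearMap.comp_apply, hz, hψ, hπ, ContinuousLinearMap.id_apply]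
  have hψπ : Function.LeftInverse ψ π := by
    suffices ⇑(ψ.comp π) ∘ Submodule.mkQ _ = Submodule.mkQ _ by
      rintro ⟨t⟩
      exact congr_fun this t
    refine h.dense.equalizer (by fun_prop) (by fun_prop) (funext fun w => ?_)
    induction w using TensorProduct.induction_on with
    | zero => simp
    | tmul a b => simp [hπ, hψ]
    | add w w' hw hw' => simp_all
  exact ⟨.equivOfInverse π ψ hψπ hπψ, hπ⟩

end BalancedTensor

section Brandt

variable {α β γ δ G : Type}

open Classical in
def brandtMul [Mul G] : Option (α × G × β) → Option (β × G × γ) → Option (α × G × γ)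
  | some (i, g, j), some (j', h, k) => if j = j' then some (i, g * h, k) else none
  | _, _ => none

@[simp]
lemma brandtMul_none_left [Mul G] (y : Option (β × G × γ)) :
    brandtMul (none : Option (α × G × β)) y = none := rfl

@[simp]
lemma brandtMul_none_right [Mul G] (x : Option (α × G × β)) :
    brandtMul x (none : Option (β × G × γ)) = none := by
  cases x <;> rfl

open Classical in
@[simp]
lemma brandtMul_some_some [Mul G] (i : α) (g : G) (j j' : β) (h : G) (k : γ) :
    brandtMul (some (i, g, j)) (some (j', h, k)) = if j = j' then some (i, g * h, k) else none :=
  rfl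

lemma brandtMul_eq_mul [Mul G] (x y : Brandt α G) : brandtMul x y = x * y := by
  rcases x with _ | ⟨i, g, j⟩ <;> rcases y with _ | ⟨j', h, k⟩ <;> rfl

lemma brandtMul_assoc [Semigroup G] (x : Option (α × G × β)) (y : Option (β × G × γ))
    (z : Option (γ × G × δ)) : brandtMul (brandtMul x y) z = brandtMul x (brandtMul y z) := by
  rcases x with _ | ⟨i, g, j⟩ <;> rcases y with _ | ⟨j', h, k⟩ <;> rcases z with _ | ⟨k', f, l⟩
    <;> simp only [brandtMul_none_left, brandtMul_none_right, brandtMul_some_some]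
  by_cases hj : j = j' <;> by_cases hk : k = k' <;> simp [hj, hk, mul_assoc]

def brandtSplit [One G] (b₀ : β) : Option (α × G × γ) → Option (α × G × β) × Option (β × G × γ)
  | some (i, g, k) => (some (i, g, b₀), some (b₀, 1, k))
  | none => (none, none)

lemma brandtMul_brandtSplit [MulOneClass G] (b₀ : β) (z : Option (α × G × γ)) :
    brandtMul (brandtSplit b₀ z).1 (brandtSplit b₀ z).2 = z := by
  rcases z with _ | ⟨i, g, k⟩ <;> simp [brandtSplit]

lemma eqvGen_brandtSplit [MulOneClass G] (b₀ : β) (x : Option (α × G × β))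
    (y : Option (β × G × γ)) :
    Relation.EqvGen (BalancingMove brandtMul brandtMul) (x, y)
      (brandtSplit b₀ (brandtMul x y)) := by
  have move : ∀ x w y, Relation.EqvGen (BalancingMove brandtMul brandtMul)
      ((brandtMul x w : Option (α × G × β)), (y : Option (β × G × γ))) (x, brandtMul w y) :=
    fun x w y => .rel _ _ ⟨x, w, y, rfl, rfl⟩
  have to_none : ∀ x, Relation.EqvGen (BalancingMove brandtMul brandtMul) (x, none) (none, none) :=
    fun x => by simpa using (move x none none).symm
  rcases x with _ | ⟨i, g, j⟩
  · simpa [brandtSplit] using move none none y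
  rcases y with _ | ⟨j', h, k⟩
  · exact to_none _
  by_cases hj : j = j'
  · subst hj
    simpa [brandtSplit] using (move (some (i, g, j)) (some (j, h, b₀)) (some (b₀, 1, k))).symm
  · have hmove := move (some (i, g, j)) (some (j, 1, j)) (some (j', h, k))
    simp only [brandtMul_some_some, if_neg hj, mul_one] at hmove
    simpa [brandtSplit, hj] using hmove.trans _ _ _ (to_none _)

end Brandt

section BrandtAlgebra

variable {α β γ G : Type} [Monoid G]

theorem exists_quotient_balancer_equiv_brandt (b₀ : β) {T : Type} [SeminormedAddCommGroup T]
    [NormedSpace ℂ T] {φ : L1 (Option (α × G × β)) →ₗ[ℂ] L1 (Option (β × G × γ)) →ₗ[ℂ] T}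
    (h : IsProjTensor _ _ T φ) :
    ∃ e : (T ⧸ balancer φ (fun x w => convL brandtMul x w) (fun w y => convL brandtMul w y))
        ≃L[ℂ] L1 (Option (α × G × γ)),
      (∀ a b, e (Submodule.Quotient.mk (φ a b)) = convL brandtMul a b) ∧
      (∀ (c : L1 (Option (α × G × α))) a b, e (Submodule.Quotient.mk (φ (convL brandtMul c a) b))
          = convL brandtMul c (e (Submodule.Quotient.mk (φ a b)))) ∧
      (∀ a b (c : L1 (Option (γ × G × γ))), e (Submodule.Quotient.mk (φ a (convL brandtMul b c)))
          = convL brandtMul (e (Submodule.Quotient.mk (φ a b))) c) := by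
  obtain ⟨e, he⟩ := exists_quotient_balancer_equiv h brandtMul_assoc (brandtSplit b₀)
    (brandtMul_brandtSplit b₀) (eqvGen_brandtSplit b₀)
  refine ⟨e, he, fun c a b => ?_, fun a b c => ?_⟩ <;> rw [he, he]
  · exact convL_convL brandtMul_assoc c a b
  · exact (convL_convL brandtMul_assoc a b c).symm

lemma leftInduced_brandt (a₀ : α) :
    LeftInduced (convL (brandtMul : Option (α × G × α) → _ → _))
      (convL (brandtMul : Option (α × G × α) → Option (α × G × β) → _)) :=
  fun _ _ _ _ h => (exists_quotient_balancer_equiv_brandt a₀ h).imp fun _ he => he.1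

lemma rightInduced_brandt (b₀ : β) :
    RightInduced (convL (brandtMul : Option (β × G × β) → _ → _))
      (convL (brandtMul : Option (α × G × β) → Option (β × G × β) → _)) :=
  fun _ _ _ _ h => (exists_quotient_balancer_equiv_brandt b₀ h).imp fun _ he => he.1

lemma selfInduced_brandt (a₀ : α) :
    SelfInduced (convL (brandtMul : Option (α × G × α) → _ → _)) :=
  fun _ _ _ _ h => exists_quotient_balancer_equiv_brandt a₀ h

lemma isBimoduleLaw_brandt :
    IsBimoduleLaw (convL (brandtMul : Option (α × G × α) → _ → _))
      (convL (brandtMul : Option (β × G × β) → _ → _)) (convL brandtMul) (convL brandtMul) :=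
  ⟨convL_convL brandtMul_assoc, convL_convL brandtMul_assoc, convL_convL brandtMul_assoc⟩

def brandtMoritaWitness {I J : Type} (i₀ : I) (j₀ : J) :
    MoritaWitness (L1 (Brandt I G)) (L1 (Brandt J G)) (convL brandtMul) (convL brandtMul) where
  P := L1 (Option (J × G × I))
  Q := L1 (Option (I × G × J))
  lP := convL brandtMul
  rP := convL brandtMul
  lQ := convL brandtMul
  rQ := convL brandtMul
  lawP := isBimoduleLaw_brandt
  lawQ := isBimoduleLaw_brandt
  indPl := leftInduced_brandt j₀
  indPr := rightInduced_brandt i₀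
  indQl := leftInduced_brandt i₀
  indQr := rightInduced_brandt j₀
  isoB _ _ _ _ h := (exists_quotient_balancer_equiv_brandt i₀ h).imp
    fun _ he => ⟨he.2.1, fun c a b => he.2.2 a b c⟩
  isoA _ _ _ _ h := (exists_quotient_balancer_equiv_brandt j₀ h).imp
    fun _ he => ⟨he.2.1, fun c a b => he.2.2 a b c⟩

end BrandtAlgebra

lemma convL_brandtMul_apply {I G : Type} [Mul G] (a b : L1 (Brandt I G)) (s : Brandt I G) :
    convL brandtMul a b s = l1conv a b s := by
  rw [convL_apply_apply, l1conv]
  exact tsum_congr fun p => by rw [brandtMul_eq_mul]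

/-- **Main result.** For nonempty sets `I, J` and a discrete group
`G`, the Brandt semigroup algebras `ℓ¹(B(I,G))` and `ℓ¹(B(J,G))` are self-induced
Banach algebras and they are Morita equivalent in the sense of Grønbæk. -/
theorem brandt_morita_stmt12 (I J G : Type) [Nonempty I] [Nonempty J] [Group G] :
    ∃ (mulSI : L1 (Brandt I G) →L[ℂ] L1 (Brandt I G) →L[ℂ] L1 (Brandt I G))
      (mulSJ : L1 (Brandt J G) →L[ℂ] L1 (Brandt J G) →L[ℂ] L1 (Brandt J G)),
      (∀ (a b : L1 (Brandt I G)) (s : Brandt I G), mulSI a b s = l1conv a b s) ∧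
      (∀ (a b : L1 (Brandt J G)) (s : Brandt J G), mulSJ a b s = l1conv a b s) ∧
      SelfInduced mulSI ∧
      SelfInduced mulSJ ∧
      MoritaEquivalent mulSI mulSJ := by
  obtain ⟨i₀⟩ := ‹Nonempty I›
  obtain ⟨j₀⟩ := ‹Nonempty J›
  exact ⟨_, _, convL_brandtMul_apply, convL_brandtMul_apply, selfInduced_brandt i₀,
    selfInduced_brandt j₀, ⟨brandtMoritaWitness i₀ j₀⟩⟩
end
end
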